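/- If N is a bridge between compact quantum metric spaces (A,L_A) and (B,L_B), then the seminorm L on A ⊕ B defined by L(a,b) = max(L_A(a), L_B(b), N(a,b)) is a Lip-norm on A ⊕ B which induces L_A and L_B via the coordinate projections; that is, L ∈ M(L_A,L_B). -/

import Mathlib

open scoped ENNReal

/-- An order-unit space in the sense of Kadison: a partially ordered real vector
space with a positive order unit `e` satisfying the order-unit property and the
Archimedean property. -/
structure OrderUnitSpace : Type 1 where
  carrier : Type
  [toAddCommGroup : AddCommGroup carrier]
  [toModule : Module ℝ carrier]
  [toPartialOrder : PartialOrder carrier]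
  add_le_add_left' : ∀ a b : carrier, a ≤ b → ∀ c : carrier, c + a ≤ c + b
  smul_nonneg' : ∀ (r : ℝ) (a : carrier), 0 ≤ r → 0 ≤ a → 0 ≤ r • a
  e : carrier
  e_nonneg : 0 ≤ e
  orderUnit : ∀ a : carrier, ∃ r : ℝ, a ≤ r • e
  arch : ∀ a : carrier, (∀ r : ℝ, 0 < r → a ≤ r • e) → a ≤ 0

attribute [instance] OrderUnitSpace.toAddCommGroup OrderUnitSpace.toModule
  OrderUnitSpace.toPartialOrder

/-- The topology generated by the open balls of a distance function. -/
def ballTopology {S : Type*} (ρ : S → S → ℝ≥0∞) : TopologicalSpace S :=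
  TopologicalSpace.generateFrom
    {U : Set S | ∃ (μ : S) (ε : ℝ≥0∞), 0 < ε ∧ U = {ν | ρ μ ν < ε}}

/-- The quotient seminorm of `L` along the surjection `π`. -/
noncomputable def quotientSeminorm {α β : Type*} (π : α → β) (L : α → ℝ) (b : β) : ℝ :=
  sInf {r : ℝ | ∃ a, π a = b ∧ L a = r}

/-- `L` induces `LB` via `π`, i.e. `LB` is the quotient seminorm of `L` for `π`. -/
def Induces {α β : Type*} (π : α → β) (L : α → ℝ) (LB : β → ℝ) : Prop :=
  ∀ b, LB b = quotientSeminorm π L b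

/-- Hausdorff distance between two subsets with respect to a distance function. -/
noncomputable def hausdorffDistWith {S : Type*} (ρ : S → S → ℝ≥0∞) (T U : Set S) : ℝ≥0∞ :=
  max (⨆ t ∈ T, ⨅ u ∈ U, ρ t u) (⨆ u ∈ U, ⨅ t ∈ T, ρ t u)

namespace OrderUnitSpace

variable (A B : OrderUnitSpace)

theorem le_of_sub_nonneg'' {x y : A.carrier} (h : 0 ≤ y - x) : x ≤ y := by
  have h2 := A.add_le_add_left' 0 (y - x) h x
  have h3 : x + (y - x) = y := by abel
  rw [add_zero, h3] at h2
  exact h2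

theorem smul_e_mono {r s : ℝ} (h : r ≤ s) : r • A.e ≤ s • A.e := by
  apply A.le_of_sub_nonneg''
  have h3 : s • A.e - r • A.e = (s - r) • A.e := by rw [sub_smul]
  rw [h3]
  exact A.smul_nonneg' _ _ (by linarith) A.e_nonneg

/-- The order-unit norm. -/
noncomputable def onorm (a : A.carrier) : ℝ :=
  sInf {r : ℝ | -(r • A.e) ≤ a ∧ a ≤ r • A.e}

/-- A state: a unital positive linear functional. -/
def IsState (μ : A.carrier →ₗ[ℝ] ℝ) : Prop :=
  μ A.e = 1 ∧ ∀ a : A.carrier, 0 ≤ a → 0 ≤ μ a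

/-- The state space. -/
def State : Type := {μ : A.carrier →ₗ[ℝ] ℝ // A.IsState μ}

/-- The weak-* topology on the state space. -/
instance : TopologicalSpace A.State :=
  TopologicalSpace.induced (fun μ : A.State => (μ.1 : A.carrier → ℝ)) Pi.topologicalSpace

/-- The metric `ρ_L` on the state space defined by a seminorm `L`. -/
noncomputable def rho (L : Seminorm ℝ A.carrier) (μ ν : A.State) : ℝ≥0∞ :=
  ⨆ a : {a : A.carrier // L a ≤ 1}, ENNReal.ofReal |μ.1 a.1 - ν.1 a.1|

/-- A Lipschitz seminorm: its null space is exactly `ℝ e`. -/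
def IsLipschitz (L : Seminorm ℝ A.carrier) : Prop :=
  ∀ a : A.carrier, L a = 0 ↔ ∃ t : ℝ, a = t • A.e

/-- A Lip-norm: a Lipschitz seminorm whose metric `ρ_L` induces the weak-* topology. -/
def IsLipNorm (L : Seminorm ℝ A.carrier) : Prop :=
  A.IsLipschitz L ∧ ballTopology (A.rho L) = (inferInstance : TopologicalSpace A.State)

/-- The diameter of the state space for `ρ_L`. -/
noncomputable def diam (L : Seminorm ℝ A.carrier) : ℝ≥0∞ :=
  ⨆ (μ : A.State) (ν : A.State), A.rho L μ ν

/-- The radius: half the diameter. -/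
noncomputable def radius (L : Seminorm ℝ A.carrier) : ℝ≥0∞ := A.diam L / 2

/-- Morphism of order-unit spaces: a unital positive linear map. -/
def IsMorphism (f : A.carrier →ₗ[ℝ] B.carrier) : Prop :=
  f A.e = B.e ∧ ∀ a : A.carrier, 0 ≤ a → 0 ≤ f a

/-- Pull back a state along a morphism; this is `S(π)`. -/
noncomputable def pullState (f : A.carrier →ₗ[ℝ] B.carrier) (hf : A.IsMorphism B f)
    (μ : B.State) : A.State :=
  ⟨(μ.1).comp f, by
    constructor
    · rw [LinearMap.comp_apply, hf.1]; exact μ.2.1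
    · intro a ha; exact μ.2.2 _ (hf.2 a ha)⟩

/-- The direct sum `A ⊕ B` as an order-unit space. -/
@[reducible] def prod : OrderUnitSpace where
  carrier := A.carrier × B.carrier
  add_le_add_left' := by
    intro a b hab c
    rw [Prod.le_def] at hab ⊢
    exact ⟨A.add_le_add_left' _ _ hab.1 _, B.add_le_add_left' _ _ hab.2 _⟩
  smul_nonneg' := by
    intro r a hr ha
    rw [Prod.le_def] at ha ⊢
    exact ⟨A.smul_nonneg' r a.1 hr ha.1, B.smul_nonneg' r a.2 hr ha.2⟩
  e := (A.e, B.e)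
  e_nonneg := by
    rw [Prod.le_def]
    exact ⟨A.e_nonneg, B.e_nonneg⟩
  orderUnit := by
    intro a
    obtain ⟨r₁, h1⟩ := A.orderUnit a.1
    obtain ⟨r₂, h2⟩ := B.orderUnit a.2
    refine ⟨max r₁ r₂, ?_⟩
    rw [Prod.le_def]
    exact ⟨le_trans h1 (A.smul_e_mono (le_max_left _ _)),
      le_trans h2 (B.smul_e_mono (le_max_right _ _))⟩
  arch := by
    intro a h
    rw [Prod.le_def]
    exact ⟨A.arch a.1 fun r hr => ((Prod.le_def.mp (h r hr)).1),
      B.arch a.2 fun r hr => ((Prod.le_def.mp (h r hr)).2)⟩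

/-- The embedding of `S(A)` into `S(A ⊕ B)` dual to the first coordinate projection. -/
noncomputable def leftState (μ : A.State) : (A.prod B).State :=
  ⟨(μ.1).comp (LinearMap.fst ℝ A.carrier B.carrier), by
    constructor
    · exact μ.2.1
    · intro p hp; exact μ.2.2 p.1 hp.1⟩

/-- The embedding of `S(B)` into `S(A ⊕ B)` dual to the second coordinate projection. -/
noncomputable def rightState (ν : B.State) : (A.prod B).State :=
  ⟨(ν.1).comp (LinearMap.snd ℝ A.carrier B.carrier), by
    constructor
    · exact ν.2.1
    · intro p hp; exact ν.2.2 p.2 hp.2⟩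

/-- The set `M(L_A, L_B)` of Lip-norms on `A ⊕ B` inducing `L_A` and `L_B`
via the coordinate projections. -/
def admissible (LA : Seminorm ℝ A.carrier) (LB : Seminorm ℝ B.carrier) :
    Set (Seminorm ℝ (A.prod B).carrier) :=
  {L | (A.prod B).IsLipNorm L ∧
    Induces (Prod.fst : A.carrier × B.carrier → A.carrier) (fun p => L p) (fun a => LA a) ∧
    Induces (Prod.snd : A.carrier × B.carrier → B.carrier) (fun p => L p) (fun b => LB b)}

/-- Quantum Gromov–Hausdorff distance. -/
noncomputable def distq (LA : Seminorm ℝ A.carrier) (LB : Seminorm ℝ B.carrier) : ℝ≥0∞ :=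
  ⨅ L ∈ A.admissible B LA LB,
    hausdorffDistWith ((A.prod B).rho L) (Set.range (A.leftState B)) (Set.range (A.rightState B))

end OrderUnitSpace

/-- A bridge between compact quantum metric spaces `(A, L_A)` and `(B, L_B)`:
a seminorm `N` on `A ⊕ B` which is (1) continuous (i.e. bounded) for the order-unit
norm, (2) vanishes at `(e_A, e_B)` but not at `(e_A, 0)`, and (3) for every `a` and
`δ > 0` there is `b` with `max(L_B(b), N(a,b)) ≤ L_A(a) + δ`, and symmetrically. -/
def IsBridge (A B : OrderUnitSpace) (LA : Seminorm ℝ A.carrier) (LB : Seminorm ℝ B.carrier)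
    (N : Seminorm ℝ (A.prod B).carrier) : Prop :=
  (∃ c : ℝ, ∀ p : A.carrier × B.carrier, N p ≤ c * (A.prod B).onorm p) ∧
  N (A.e, B.e) = 0 ∧ N (A.e, 0) ≠ 0 ∧
  (∀ a : A.carrier, ∀ δ : ℝ, 0 < δ →
    ∃ b : B.carrier, max (LB b) (N (a, b)) ≤ LA a + δ) ∧
  (∀ b : B.carrier, ∀ δ : ℝ, 0 < δ →
    ∃ a : A.carrier, max (LA a) (N (a, b)) ≤ LB b + δ)

/-!
The Lipschitz property and the two quotient conditions follow directly from the bridge axioms;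
the substance is that `ρ_L` induces the weak-* topology on `S(A ⊕ B)`. Evaluations are
`ρ_L`-Lipschitz, which gives one inclusion. For the other, a state `p` of `A ⊕ B` splits as
`s φ ⊕ (1 - s) ψ` with `φ`, `ψ` states of `A`, `B`, and on the `L`-unit ball
`(p - p₀)(a, b) = s (φ - φ₀)(a) + (1 - s) (ψ - ψ₀)(b) + (s - s₀) (φ₀ a - ψ₀ b)`. The first two
terms are small near `p₀` because `L_A`, `L_B` are Lip-norms. The last one is small because
`|φ₀ a - ψ₀ b|` is bounded on the unit ball: recentring `(a, b)` by scalars costs an order-unit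
norm bounded by the diameters of `S(A)`, `S(B)` (finite, since state spaces are compact and
connected; converting bounds on states into order bounds is Hahn–Banach), `N` is norm-continuous,
and `N (s e_A, t e_B) = |s - t| N (e_A, 0)` with `N (e_A, 0) ≠ 0`.
-/

open Filter Topology

theorem induces_of_le_of_exists {α β : Type*} {π : α → β} {L : α → ℝ} {LB : β → ℝ}
    (hle : ∀ a, LB (π a) ≤ L a) (hex : ∀ b (δ : ℝ), 0 < δ → ∃ a, π a = b ∧ L a ≤ LB b + δ) :
    Induces π L LB := by
  intro b
  have hne : {r | ∃ a, π a = b ∧ L a = r}.Nonempty :=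
    let ⟨a, ha, _⟩ := hex b 1 one_pos
    ⟨_, a, ha, rfl⟩
  have hbdd : BddBelow {r | ∃ a, π a = b ∧ L a = r} :=
    ⟨LB b, by rintro _ ⟨a, rfl, rfl⟩; exact hle a⟩
  refine le_antisymm (le_csInf hne ?_) (le_of_forall_pos_le_add fun δ hδ => ?_)
  · rintro _ ⟨a, rfl, rfl⟩
    exact hle a
  · obtain ⟨a, rfl, ha⟩ := hex b δ hδ
    exact (csInf_le hbdd ⟨a, rfl, rfl⟩).trans ha

section ballTopology

variable {S : Type*} {ρ : S → S → ℝ≥0∞}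

theorem setOf_lt_mem_nhds_ballTopology (hρ : ∀ x, ρ x x = 0) (x : S) {ε : ℝ≥0∞}
    (hε : 0 < ε) :
    {y | ρ x y < ε} ∈ @nhds S (ballTopology ρ) x :=
  @IsOpen.mem_nhds S (ballTopology ρ) _ _
    (TopologicalSpace.GenerateOpen.basic _ ⟨x, ε, hε, rfl⟩) (by simpa [hρ x] using hε)

theorem continuous_ballTopology_of_le_mul (hρ : ∀ x, ρ x x = 0) {f : S → ℝ} {C : ℝ}
    (hC : 0 ≤ C) (hf : ∀ x y, ENNReal.ofReal |f x - f y| ≤ ENNReal.ofReal C * ρ x y) :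
    @Continuous S ℝ (ballTopology ρ) _ f := by
  let := ballTopology ρ
  refine continuous_iff_continuousAt.mpr fun x => Metric.tendsto_nhds.mpr fun ε hε => ?_
  have hC₁ : 0 < C + 1 := by positivity
  filter_upwards [setOf_lt_mem_nhds_ballTopology hρ x
    (ENNReal.ofReal_pos.mpr (div_pos hε hC₁))] with y hy
  have : ENNReal.ofReal |f x - f y| < ENNReal.ofReal ε := by
    calc ENNReal.ofReal |f x - f y|
        ≤ ENNReal.ofReal C * ENNReal.ofReal (ε / (C + 1)) := (hf x y).trans (by gcongr)
      _ = ENNReal.ofReal (C * (ε / (C + 1))) := (ENNReal.ofReal_mul hC).symm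
      _ < ENNReal.ofReal ε := by
          refine (ENNReal.ofReal_lt_ofReal_iff hε).mpr ?_
          rw [mul_div_assoc', div_lt_iff₀ hC₁]
          nlinarith
  rw [Real.dist_eq, abs_sub_comm]
  exact (ENNReal.ofReal_lt_ofReal_iff hε).mp this

theorem le_ballTopology [t : TopologicalSpace S] (hρ : ∀ x y z, ρ x z ≤ ρ x y + ρ y z)
    (h : ∀ x (η : ℝ), 0 < η → ∀ᶠ y in 𝓝 x, ρ x y ≤ ENNReal.ofReal η) :
    t ≤ ballTopology ρ := by
  refine le_generateFrom fun _ ⟨x, ε, _, hU⟩ => hU ▸ ?_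
  refine isOpen_iff_mem_nhds.mpr fun y (hy : ρ x y < ε) => ?_
  obtain ⟨δ, hδ, hδε⟩ := ENNReal.lt_iff_exists_add_pos_lt.mp hy
  filter_upwards [h y δ hδ] with z hz
  rw [ENNReal.ofReal_coe_nnreal] at hz
  exact ((hρ x y z).trans (add_le_add_right hz _)).trans_lt hδε

end ballTopology

namespace OrderUnitSpace

noncomputable def orderCeil (X : OrderUnitSpace) (x : X.carrier) : ℝ :=
  sInf {r : ℝ | x ≤ r • X.e}

variable {X : OrderUnitSpace}

instance : IsOrderedAddMonoid X.carrier :=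
  ⟨fun a b h c => by simpa only [add_comm _ c] using X.add_le_add_left' a b h c,
    fun a b h c => X.add_le_add_left' a b h c⟩

instance : PosSMulMono ℝ X.carrier :=
  ⟨fun r hr a b hab => sub_nonneg.mp <| by
    simpa only [smul_sub] using X.smul_nonneg' r (b - a) hr (sub_nonneg.mpr hab)⟩

theorem smul_e_le_smul_e_iff (he : X.e ≠ 0) {r s : ℝ} : r • X.e ≤ s • X.e ↔ r ≤ s := by
  refine ⟨fun h => ?_, X.smul_e_mono⟩
  by_contra! hsr
  have hneg : (r - s) • X.e ≤ 0 := by rw [sub_smul]; exact sub_nonpos.mpr h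
  have : X.e ≤ 0 := by
    simpa [smul_smul, inv_mul_cancel₀ (sub_pos.mpr hsr).ne'] using
      smul_le_smul_of_nonneg_left hneg (inv_nonneg.mpr (sub_pos.mpr hsr).le)
  exact he (le_antisymm this X.e_nonneg)

theorem apply_le_mul_apply_e {f : X.carrier →ₗ[ℝ] ℝ} (hf : ∀ x, 0 ≤ x → 0 ≤ f x)
    {x : X.carrier} {r : ℝ} (h : x ≤ r • X.e) : f x ≤ r * f X.e := by
  simpa [sub_nonneg] using hf _ (sub_nonneg.mpr h)

theorem eq_zero_of_apply_e_eq_zero {f : X.carrier →ₗ[ℝ] ℝ} (hf : ∀ x, 0 ≤ x → 0 ≤ f x)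
    (hfe : f X.e = 0) (x : X.carrier) : f x = 0 := by
  obtain ⟨r, hr⟩ := X.orderUnit x
  obtain ⟨s, hs⟩ := X.orderUnit (-x)
  have h₁ := apply_le_mul_apply_e hf hr
  have h₂ := apply_le_mul_apply_e hf hs
  rw [hfe, mul_zero] at h₁ h₂
  rw [map_neg] at h₂
  linarith

theorem State.apply_smul_e (μ : X.State) (t : ℝ) : μ.1 (t • X.e) = t := by
  rw [map_smul, μ.2.1, smul_eq_mul, mul_one]

theorem State.apply_le_of_le_smul_e (μ : X.State) {x : X.carrier} {r : ℝ}
    (h : x ≤ r • X.e) : μ.1 x ≤ r := by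
  simpa [μ.2.1] using apply_le_mul_apply_e μ.2.2 h

theorem exists_state_eq_smul [Nonempty X.State] {f : X.carrier →ₗ[ℝ] ℝ}
    (hf : ∀ x, 0 ≤ x → 0 ≤ f x) : ∃ φ : X.State, ∀ x, f x = f X.e * φ.1 x := by
  rcases (hf X.e X.e_nonneg).eq_or_lt with h0 | hpos
  · exact ⟨Classical.arbitrary _, fun x => by
      rw [eq_zero_of_apply_e_eq_zero hf h0.symm, ← h0, zero_mul]⟩
  · refine ⟨⟨(f X.e)⁻¹ • f, by simp [hpos.ne'], fun x hx => ?_⟩, fun x => ?_⟩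
    · simpa using mul_nonneg (inv_nonneg.mpr hpos.le) (hf x hx)
    · simp [hpos.ne']

section orderCeil

variable (he : X.e ≠ 0)
include he

theorem bddBelow_setOf_le_smul_e (x : X.carrier) : BddBelow {r : ℝ | x ≤ r • X.e} := by
  obtain ⟨s, hs⟩ := X.orderUnit (-x)
  refine ⟨-s, fun r hr => ?_⟩
  have : (0 : ℝ) • X.e ≤ (r + s) • X.e := by
    simpa [add_smul] using add_le_add hr hs
  linarith [(smul_e_le_smul_e_iff he).mp this]

theorem orderCeil_le_iff {x : X.carrier} {r : ℝ} : X.orderCeil x ≤ r ↔ x ≤ r • X.e := by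
  refine ⟨fun h => ?_, fun h => csInf_le (bddBelow_setOf_le_smul_e he x) h⟩
  refine sub_nonpos.mp (X.arch _ fun ε hε => ?_)
  obtain ⟨s, hs, hsr⟩ := (csInf_lt_iff (bddBelow_setOf_le_smul_e he x) (X.orderUnit x)).mp
    (show X.orderCeil x < r + ε by linarith)
  rw [sub_le_iff_le_add, ← add_smul, add_comm ε]
  exact hs.trans (X.smul_e_mono hsr.le)

theorem le_orderCeil_smul_e (x : X.carrier) : x ≤ X.orderCeil x • X.e :=
  (orderCeil_le_iff he).mp le_rfl

theorem orderCeil_smul_e (r : ℝ) : X.orderCeil (r • X.e) = r :=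
  le_antisymm ((orderCeil_le_iff he).mpr le_rfl)
    ((smul_e_le_smul_e_iff he).mp (le_orderCeil_smul_e he _))

theorem orderCeil_add_le (x y : X.carrier) :
    X.orderCeil (x + y) ≤ X.orderCeil x + X.orderCeil y := by
  rw [orderCeil_le_iff he, add_smul]
  exact add_le_add (le_orderCeil_smul_e he x) (le_orderCeil_smul_e he y)

theorem orderCeil_smul_le {c : ℝ} (hc : 0 ≤ c) (x : X.carrier) :
    X.orderCeil (c • x) ≤ c * X.orderCeil x := by
  rw [orderCeil_le_iff he, mul_smul]
  exact smul_le_smul_of_nonneg_left (le_orderCeil_smul_e he x) hc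

theorem orderCeil_smul {c : ℝ} (hc : 0 < c) (x : X.carrier) :
    X.orderCeil (c • x) = c * X.orderCeil x := by
  refine le_antisymm (orderCeil_smul_le he hc.le x) ?_
  have := orderCeil_smul_le he (inv_nonneg.mpr hc.le) (c • x)
  rw [smul_smul, inv_mul_cancel₀ hc.ne', one_smul] at this
  rwa [← le_inv_mul_iff₀ hc]

theorem mul_orderCeil_le_orderCeil_smul (c : ℝ) (x : X.carrier) :
    c * X.orderCeil x ≤ X.orderCeil (c • x) := by
  rcases lt_or_ge 0 c with hc | hc
  · rw [orderCeil_smul he hc]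
  · have h₀ : X.orderCeil (c • x + (-c) • x) = 0 := by
      simpa using orderCeil_smul_e he 0
    have := orderCeil_add_le he (c • x) ((-c) • x)
    linarith [orderCeil_smul_le he (neg_nonneg.mpr hc) x]

/-- Hahn–Banach, extending `c • x ↦ c * orderCeil x` under the sublinear `orderCeil`. -/
theorem exists_state_apply_eq_orderCeil (x : X.carrier) :
    ∃ μ : X.State, μ.1 x = X.orderCeil x := by
  let f : X.carrier →ₗ.[ℝ] ℝ := LinearPMap.mkSpanSingleton' x (X.orderCeil x) fun c hc => by
    rcases eq_or_ne c 0 with rfl | hc0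
    · simp
    · rw [(smul_eq_zero.mp hc).resolve_left hc0, ← zero_smul ℝ X.e, orderCeil_smul_e he]
      simp
  obtain ⟨g, hgf, hg⟩ := exists_extension_of_le_sublinear f X.orderCeil
    (fun c hc => orderCeil_smul he hc) (orderCeil_add_le he) fun ⟨y, hy⟩ => by
      obtain ⟨c, rfl⟩ := Submodule.mem_span_singleton.mp hy
      rw [LinearPMap.mkSpanSingleton'_apply]
      exact mul_orderCeil_le_orderCeil_smul he c x
  have hge : g X.e = 1 := by
    have h₁ := hg X.e
    have h₂ := hg (-X.e)
    rw [← one_smul ℝ X.e, orderCeil_smul_e he] at h₁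
    rw [← neg_one_smul ℝ X.e, orderCeil_smul_e he, map_smul] at h₂
    simp only [one_smul, smul_eq_mul] at h₁ h₂
    linarith
  refine ⟨⟨g, hge, fun y hy => ?_⟩, ?_⟩
  · have := hg (-y)
    rw [map_neg] at this
    linarith [(orderCeil_le_iff he (x := -y) (r := 0)).mpr (by simpa using hy)]
  · exact (hgf ⟨x, Submodule.mem_span_singleton_self x⟩).trans
      (LinearPMap.mkSpanSingleton'_apply_self _ _ _ _)

theorem nonempty_state : Nonempty X.State :=
  (exists_state_apply_eq_orderCeil he X.e).nonempty

theorem le_smul_e_of_forall_state {x : X.carrier} {r : ℝ} (h : ∀ μ : X.State, μ.1 x ≤ r) :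
    x ≤ r • X.e := by
  obtain ⟨μ, hμ⟩ := exists_state_apply_eq_orderCeil he x
  exact (orderCeil_le_iff he).mp (hμ ▸ h μ)

theorem mem_Icc_of_forall_abs_state_le {x : X.carrier} {r : ℝ}
    (h : ∀ μ : X.State, |μ.1 x| ≤ r) : x ∈ Set.Icc (-(r • X.e)) (r • X.e) :=
  ⟨neg_le.mp <| le_smul_e_of_forall_state he fun μ => by
      rw [map_neg]; exact (neg_le_abs _).trans (h μ),
    le_smul_e_of_forall_state he fun μ => (le_abs_self _).trans (h μ)⟩

theorem onorm_nonneg (x : X.carrier) : 0 ≤ X.onorm x := by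
  refine le_csInf ?_ fun r ⟨h₁, h₂⟩ => ?_
  · obtain ⟨r, hr⟩ := X.orderUnit x
    obtain ⟨s, hs⟩ := X.orderUnit (-x)
    exact ⟨max r s, neg_le.mp (hs.trans (X.smul_e_mono (le_max_right r s))),
      hr.trans (X.smul_e_mono (le_max_left r s))⟩
  · have : (0 : ℝ) • X.e ≤ (r + r) • X.e := by
      simpa [add_smul] using add_le_add h₂ (neg_le.mp h₁)
    linarith [(smul_e_le_smul_e_iff he).mp this]

theorem onorm_le {x : X.carrier} {r : ℝ} (h : x ∈ Set.Icc (-(r • X.e)) (r • X.e)) :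
    X.onorm x ≤ r := by
  refine csInf_le ⟨0, fun s ⟨h₁, h₂⟩ => ?_⟩ h
  have : (0 : ℝ) • X.e ≤ (s + s) • X.e := by
    simpa [add_smul] using add_le_add h₂ (neg_le.mp h₁)
  linarith [(smul_e_le_smul_e_iff he).mp this]

end orderCeil

variable {L : Seminorm ℝ X.carrier}

theorem rho_self (μ : X.State) : X.rho L μ μ = 0 := by
  simp [rho]

theorem rho_comm (μ ν : X.State) : X.rho L μ ν = X.rho L ν μ := by
  simp only [rho, abs_sub_comm]

theorem ofReal_abs_le_rho (μ ν : X.State) {a : X.carrier} (ha : L a ≤ 1) :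
    ENNReal.ofReal |μ.1 a - ν.1 a| ≤ X.rho L μ ν :=
  le_iSup_of_le (⟨a, ha⟩ : {a : X.carrier // L a ≤ 1}) le_rfl

theorem rho_le_ofReal {μ ν : X.State} {η : ℝ}
    (h : ∀ a, L a ≤ 1 → |μ.1 a - ν.1 a| ≤ η) : X.rho L μ ν ≤ ENNReal.ofReal η :=
  iSup_le fun a => ENNReal.ofReal_le_ofReal (h a.1 a.2)

theorem rho_triangle (μ κ ν : X.State) : X.rho L μ ν ≤ X.rho L μ κ + X.rho L κ ν := by
  refine iSup_le fun ⟨a, ha⟩ => ?_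
  calc ENNReal.ofReal |μ.1 a - ν.1 a|
      ≤ ENNReal.ofReal (|μ.1 a - κ.1 a| + |κ.1 a - ν.1 a|) :=
        ENNReal.ofReal_le_ofReal (abs_sub_le _ _ _)
    _ ≤ X.rho L μ κ + X.rho L κ ν := by
        rw [ENNReal.ofReal_add (abs_nonneg _) (abs_nonneg _)]
        exact add_le_add (ofReal_abs_le_rho μ κ ha) (ofReal_abs_le_rho κ ν ha)

theorem ofReal_abs_le_mul_rho (hL : X.IsLipschitz L) (μ ν : X.State) (a : X.carrier) :
    ENNReal.ofReal |μ.1 a - ν.1 a| ≤ ENNReal.ofReal (L a) * X.rho L μ ν := by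
  rcases (apply_nonneg L a).eq_or_lt with h0 | hpos
  · obtain ⟨t, rfl⟩ := (hL a).mp h0.symm
    rw [State.apply_smul_e, State.apply_smul_e, sub_self, abs_zero, ENNReal.ofReal_zero]
    exact zero_le
  · have h := ofReal_abs_le_rho (L := L) μ ν (a := (L a)⁻¹ • a) (by
      rw [map_smul_eq_mul, Real.norm_eq_abs, abs_of_pos (inv_pos.mpr hpos),
        inv_mul_cancel₀ hpos.ne'])
    rw [map_smul, map_smul, smul_eq_mul, smul_eq_mul, ← mul_sub, abs_mul,
      abs_of_pos (inv_pos.mpr hpos), ENNReal.ofReal_mul (inv_nonneg.mpr hpos.le),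
      ENNReal.ofReal_inv_of_pos hpos] at h
    rwa [ENNReal.inv_mul_le_iff (by simpa using hpos) ENNReal.ofReal_ne_top] at h

theorem continuous_state_apply (x : X.carrier) : Continuous fun μ : X.State => μ.1 x :=
  (continuous_apply x).comp continuous_induced_dom

theorem isInducing_state_coe : Topology.IsInducing fun μ : X.State => (μ.1 : X.carrier → ℝ) :=
  ⟨rfl⟩

theorem ballTopology_le_of_isLipschitz (hL : X.IsLipschitz L) :
    ballTopology (X.rho L) ≤ (inferInstance : TopologicalSpace X.State) :=
  continuous_iff_le_induced.mp <| @continuous_pi _ _ _ (ballTopology (X.rho L)) _ _ fun a =>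
    continuous_ballTopology_of_le_mul rho_self (apply_nonneg L a) fun μ ν =>
      ofReal_abs_le_mul_rho hL μ ν a

instance : CompactSpace X.State := by
  choose r hr using X.orderUnit
  have hrange : Set.range (fun μ : X.State => (μ.1 : X.carrier → ℝ)) =
      Set.range (DFunLike.coe : (X.carrier →ₗ[ℝ] ℝ) → X.carrier → ℝ) ∩ {f | f X.e = 1} ∩
        ⋂ x ∈ {x : X.carrier | 0 ≤ x}, {f | 0 ≤ f x} := by
    ext f
    simp only [Set.mem_range, Set.mem_inter_iff, Set.mem_iInter, Set.mem_ofPred_eq]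
    constructor
    · rintro ⟨μ, rfl⟩
      exact ⟨⟨⟨μ.1, rfl⟩, μ.2.1⟩, μ.2.2⟩
    · rintro ⟨⟨⟨g, rfl⟩, hg⟩, hpos⟩
      exact ⟨⟨g, hg, hpos⟩, rfl⟩
  have hclosed : IsClosed (Set.range fun μ : X.State => (μ.1 : X.carrier → ℝ)) := by
    rw [hrange]
    exact ((LinearMap.isClosed_range_coe _ _ _).inter
      (isClosed_eq (continuous_apply X.e) continuous_const)).inter
      (isClosed_biInter fun x _ => isClosed_le continuous_const (continuous_apply x))
  have hbounded : (Set.range fun μ : X.State => (μ.1 : X.carrier → ℝ)) ⊆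
      Set.univ.pi fun x => Set.Icc (-r (-x)) (r x) := by
    rintro _ ⟨μ, rfl⟩ x -
    exact ⟨neg_le.mp (by simpa using μ.apply_le_of_le_smul_e (hr (-x))),
      μ.apply_le_of_le_smul_e (hr x)⟩
  refine isCompact_univ_iff.mp (isInducing_state_coe.isCompact_iff.mpr ?_)
  rw [Set.image_univ]
  exact (isCompact_univ_pi fun x => isCompact_Icc).of_isClosed_subset hclosed hbounded

instance : PreconnectedSpace X.State := by
  refine ⟨isInducing_state_coe.isPreconnected_image.mp ?_⟩
  rw [Set.image_univ]
  refine Convex.isPreconnected ?_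
  rintro _ ⟨μ, rfl⟩ _ ⟨ν, rfl⟩ a b ha hb hab
  refine ⟨⟨a • μ.1 + b • ν.1, by simp [μ.2.1, ν.2.1, hab], fun x hx => ?_⟩, by ext; simp⟩
  simpa using add_nonneg (mul_nonneg ha (μ.2.2 x hx)) (mul_nonneg hb (ν.2.2 x hx))

theorem IsLipNorm.isOpen_ball (hL : X.IsLipNorm L) (μ : X.State) {ε : ℝ≥0∞} (hε : 0 < ε) :
    IsOpen {ν | X.rho L μ ν < ε} := by
  have h : (ballTopology (X.rho L)).IsOpen {ν | X.rho L μ ν < ε} :=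
    TopologicalSpace.GenerateOpen.basic _ ⟨μ, ε, hε, rfl⟩
  rwa [hL.2] at h

theorem IsLipNorm.ball_mem_nhds (hL : X.IsLipNorm L) (μ : X.State) {ε : ℝ≥0∞} (hε : 0 < ε) :
    {ν | X.rho L μ ν < ε} ∈ 𝓝 μ :=
  (hL.isOpen_ball μ hε).mem_nhds (by simpa [rho_self] using hε)

/-- The states at finite distance from `μ` form a clopen set, hence all states. -/
theorem IsLipNorm.rho_ne_top (hL : X.IsLipNorm L) (μ ν : X.State) : X.rho L μ ν ≠ ⊤ := by
  let G : Set X.State := {κ | X.rho L μ κ ≠ ⊤}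
  have hopen : IsOpen G := isOpen_iff_mem_nhds.mpr fun κ hκ =>
    Filter.mem_of_superset (hL.ball_mem_nhds κ one_pos) fun κ' hκ' =>
      ne_top_of_le_ne_top (ENNReal.add_ne_top.mpr ⟨hκ, (hκ'.trans ENNReal.one_lt_top).ne⟩)
        (rho_triangle μ κ κ')
  have hclosed : IsClosed G := isOpen_compl_iff.mp <| isOpen_iff_mem_nhds.mpr fun κ hκ =>
    Filter.mem_of_superset (hL.ball_mem_nhds κ one_pos) fun κ' (hκ' : X.rho L κ κ' < 1) hG =>
      hκ <| ne_top_of_le_ne_top (ENNReal.add_ne_top.mpr ⟨hG,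
        (rho_comm (L := L) κ' κ ▸ hκ'.trans ENNReal.one_lt_top).ne⟩) (rho_triangle μ κ' κ)
  have hG : G = Set.univ := IsClopen.eq_univ ⟨hclosed, hopen⟩ ⟨μ, by simp [G, rho_self]⟩
  exact show ν ∈ G from hG ▸ Set.mem_univ ν

theorem IsLipNorm.diam_ne_top (hL : X.IsLipNorm L) : X.diam L ≠ ⊤ := by
  rcases isEmpty_or_nonempty X.State with hX | ⟨⟨μ₀⟩⟩
  · simp [diam]
  obtain ⟨n, hn⟩ := isCompact_univ.elim_directed_cover
    (fun n : ℕ => {ν | X.rho L μ₀ ν < n + 1}) (fun n => hL.isOpen_ball μ₀ (by positivity))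
    (fun ν _ => Set.mem_iUnion.mpr <| (ENNReal.exists_nat_gt (hL.rho_ne_top μ₀ ν)).imp
      fun n hn => hn.trans_le le_self_add)
    (Monotone.directed_le fun m n hmn ν (hν : X.rho L μ₀ ν < m + 1) => hν.trans_le (by gcongr))
  have hbound : ∀ ν, X.rho L μ₀ ν ≤ n + 1 := fun ν => (hn (Set.mem_univ ν)).le
  refine ne_top_of_le_ne_top (b := (n + 1) + (n + 1)) (by simp) (iSup₂_le fun μ ν => ?_)
  exact (rho_triangle μ μ₀ ν).trans (add_le_add (rho_comm (L := L) μ μ₀ ▸ hbound μ) (hbound ν))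

theorem abs_sub_le_toReal_diam (hL : X.diam L ≠ ⊤) (μ ν : X.State) {a : X.carrier}
    (ha : L a ≤ 1) : |μ.1 a - ν.1 a| ≤ (X.diam L).toReal :=
  (ENNReal.ofReal_le_iff_le_toReal hL).mp <| (ofReal_abs_le_rho μ ν ha).trans <|
    le_iSup₂ (f := fun μ ν => X.rho L μ ν) μ ν

/-- Where `F t₀ e = 0` this is the finiteness of the diameter; otherwise the normalizations
`F t / F t e` converge weak-* to `φ₀`, hence in `ρ_L`. -/
theorem IsLipNorm.eventually_abs_sub_le (hL : X.IsLipNorm L) [Nonempty X.State]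
    {T : Type*} [TopologicalSpace T] {F : T → X.carrier →ₗ[ℝ] ℝ}
    (hpos : ∀ t x, 0 ≤ x → 0 ≤ F t x) (hcont : ∀ x, Continuous fun t => F t x)
    (hle : ∀ t, F t X.e ≤ 1) (t₀ : T) {η : ℝ} (hη : 0 < η) :
    ∃ φ₀ : X.State, (∀ x, F t₀ x = F t₀ X.e * φ₀.1 x) ∧
      ∀ᶠ t in 𝓝 t₀, ∀ x, L x ≤ 1 → |F t x - F t X.e * φ₀.1 x| ≤ η := by
  obtain ⟨φ₀, hφ₀⟩ := exists_state_eq_smul (hpos t₀)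
  refine ⟨φ₀, hφ₀, ?_⟩
  have hsplit : ∀ t (φ : X.State), (∀ x, F t x = F t X.e * φ.1 x) →
      ∀ x, |F t x - F t X.e * φ₀.1 x| = F t X.e * |φ.1 x - φ₀.1 x| := fun t φ hφ x => by
    rw [hφ x, ← mul_sub, abs_mul, abs_of_nonneg (hpos t _ X.e_nonneg)]
  rcases (hpos t₀ X.e X.e_nonneg).eq_or_lt with h0 | hpos₀
  · have hsmall : ∀ᶠ t in 𝓝 t₀, F t X.e * (X.diam L).toReal < η :=
      ((hcont X.e).mul continuous_const).continuousAt.eventually_lt continuousAt_const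
        (by simpa [← h0] using hη)
    filter_upwards [hsmall] with t ht x hx
    obtain ⟨φ, hφ⟩ := exists_state_eq_smul (hpos t)
    rw [hsplit t φ hφ]
    exact (mul_le_mul_of_nonneg_left (abs_sub_le_toReal_diam hL.diam_ne_top φ φ₀ hx)
      (hpos t _ X.e_nonneg)).trans ht.le
  · have hball := hL.ball_mem_nhds φ₀ (ENNReal.ofReal_pos.mpr hη)
    rw [nhds_induced] at hball
    obtain ⟨O, hO, hOball⟩ := hball
    have hnormalize : Tendsto (fun t x => F t x / F t X.e) (𝓝 t₀) (𝓝 (φ₀.1 : X.carrier → ℝ)) :=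
      tendsto_pi_nhds.mpr fun x => by
        simpa [Pi.div_def, hφ₀ x, hpos₀.ne'] using
          ((hcont x).tendsto t₀).div ((hcont X.e).tendsto t₀) hpos₀.ne'
    filter_upwards [hnormalize hO,
      continuousAt_const.eventually_lt (hcont X.e).continuousAt hpos₀] with t hGt ht x hx
    obtain ⟨φ, hφ⟩ := exists_state_eq_smul (hpos t)
    have hφ_eq : (φ.1 : X.carrier → ℝ) = fun x => F t x / F t X.e :=
      funext fun x => by rw [hφ x, mul_div_cancel_left₀ _ ht.ne']
    have hball : X.rho L φ₀ φ < ENNReal.ofReal η :=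
      hOball (show (φ.1 : X.carrier → ℝ) ∈ O by rwa [hφ_eq])
    rw [hsplit t φ hφ, abs_sub_comm]
    calc F t X.e * |φ₀.1 x - φ.1 x| ≤ 1 * η :=
          mul_le_mul (hle t) ((ENNReal.ofReal_lt_ofReal_iff hη).mp
            ((ofReal_abs_le_rho φ₀ φ hx).trans_lt hball)).le (abs_nonneg _) zero_le_one
      _ = η := one_mul η

section Prod

variable {A B : OrderUnitSpace}

theorem prod_state_apply (p : (A.prod B).State) (a : A.carrier) (b : B.carrier) :
    p.1 (a, b) = p.1 (a, 0) + p.1 (0, b) := by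
  rw [← map_add, Prod.mk_add_mk, add_zero, zero_add]

theorem prod_state_apply_e_add (p : (A.prod B).State) : p.1 (A.e, 0) + p.1 (0, B.e) = 1 := by
  rw [← prod_state_apply]
  exact p.2.1

theorem prod_state_apply_e_fst_le_one (p : (A.prod B).State) : p.1 (A.e, 0) ≤ 1 := by
  linarith [prod_state_apply_e_add p, p.2.2 (0, B.e) ⟨le_rfl, B.e_nonneg⟩]

theorem prod_state_apply_e_snd_le_one (p : (A.prod B).State) : p.1 (0, B.e) ≤ 1 := by
  linarith [prod_state_apply_e_add p, p.2.2 (A.e, 0) ⟨A.e_nonneg, le_rfl⟩]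

theorem abs_prod_state_sub_le {p₀ : (A.prod B).State} (p : (A.prod B).State) {φ₀ : A.State}
    {ψ₀ : B.State} (hφ₀ : ∀ a, p₀.1 (a, 0) = p₀.1 (A.e, 0) * φ₀.1 a)
    (hψ₀ : ∀ b, p₀.1 (0, b) = p₀.1 (0, B.e) * ψ₀.1 b) (a : A.carrier) (b : B.carrier) :
    |p₀.1 (a, b) - p.1 (a, b)| ≤ |p.1 (a, 0) - p.1 (A.e, 0) * φ₀.1 a| +
      |p.1 (0, b) - p.1 (0, B.e) * ψ₀.1 b| +
      |p.1 (A.e, 0) - p₀.1 (A.e, 0)| * |φ₀.1 a - ψ₀.1 b| := by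
  have hdecomp : p₀.1 (a, b) - p.1 (a, b) = -((p.1 (a, 0) - p.1 (A.e, 0) * φ₀.1 a) +
      (p.1 (0, b) - p.1 (0, B.e) * ψ₀.1 b) +
      (p.1 (A.e, 0) - p₀.1 (A.e, 0)) * (φ₀.1 a - ψ₀.1 b)) := by
    rw [prod_state_apply p, prod_state_apply p₀]
    linear_combination hφ₀ a + hψ₀ b + ψ₀.1 b * (prod_state_apply_e_add p₀ -
      prod_state_apply_e_add p)
  rw [hdecomp, abs_neg, ← abs_mul]
  exact abs_add_three _ _ _

end Prod

end OrderUnitSpace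

open OrderUnitSpace

def bridgeSeminorm {A B : OrderUnitSpace} (LA : Seminorm ℝ A.carrier) (LB : Seminorm ℝ B.carrier)
    (N : Seminorm ℝ (A.prod B).carrier) : Seminorm ℝ (A.prod B).carrier :=
  LA.comp (LinearMap.fst ℝ A.carrier B.carrier) ⊔ LB.comp (LinearMap.snd ℝ A.carrier B.carrier) ⊔ N

theorem bridgeSeminorm_le_iff {A B : OrderUnitSpace} {LA : Seminorm ℝ A.carrier}
    {LB : Seminorm ℝ B.carrier} {N : Seminorm ℝ (A.prod B).carrier} {p : A.carrier × B.carrier}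
    {r : ℝ} : bridgeSeminorm LA LB N p ≤ r ↔ LA p.1 ≤ r ∧ LB p.2 ≤ r ∧ N p ≤ r := by
  simp [bridgeSeminorm, and_assoc]

namespace IsBridge

variable {A B : OrderUnitSpace} {LA : Seminorm ℝ A.carrier} {LB : Seminorm ℝ B.carrier}
  {N : Seminorm ℝ (A.prod B).carrier}

variable (hN : IsBridge A B LA LB N)
include hN

theorem apply_e_fst_pos : 0 < N (A.e, 0) :=
  (apply_nonneg N _).lt_of_ne' hN.2.2.1

theorem e_fst_ne_zero : A.e ≠ 0 := fun h => hN.2.2.1 (by rw [h, ← Prod.zero_eq_mk, map_zero])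

theorem e_snd_ne_zero : B.e ≠ 0 := fun h => hN.2.2.1 (by simpa [h] using hN.2.1)

theorem apply_smul_e (s t : ℝ) : N (s • A.e, t • B.e) = |s - t| * N (A.e, 0) := by
  have hdecomp : ((s • A.e, t • B.e) : A.carrier × B.carrier) =
      (s - t) • (A.e, 0) + t • (A.e, B.e) := by
    ext <;> simp [sub_smul]
  have hunit : N (t • (A.e, B.e)) = 0 := by
    rw [map_smul_eq_mul]
    exact mul_eq_zero_of_right _ hN.2.1
  rw [hdecomp, ← Real.norm_eq_abs, ← map_smul_eq_mul]
  refine le_antisymm ((map_add_le_add N _ _).trans (by rw [hunit, add_zero])) ?_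
  have := map_sub_le_add N ((s - t) • (A.e, 0) + t • (A.e, B.e)) (t • (A.e, B.e))
  rwa [add_sub_cancel_right, hunit, add_zero] at this

theorem isLipschitz_bridgeSeminorm (hLA : A.IsLipschitz LA) (hLB : B.IsLipschitz LB) :
    (A.prod B).IsLipschitz (bridgeSeminorm LA LB N) := by
  intro p
  constructor
  · intro h
    obtain ⟨a, b⟩ := p
    obtain ⟨ha, hb, hab⟩ := bridgeSeminorm_le_iff.mp h.le
    obtain ⟨s, rfl⟩ := (hLA a).mp (le_antisymm ha (apply_nonneg _ _))
    obtain ⟨t, rfl⟩ := (hLB b).mp (le_antisymm hb (apply_nonneg _ _))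
    have hst : |s - t| * N (A.e, 0) = 0 := by
      rw [← hN.apply_smul_e]
      exact le_antisymm hab (apply_nonneg _ _)
    obtain rfl : s = t := by
      simpa [sub_eq_zero, hN.apply_e_fst_pos.ne'] using hst
    exact ⟨s, rfl⟩
  · rintro ⟨t, rfl⟩
    have hA : LA A.e = 0 := (hLA A.e).mpr ⟨1, (one_smul ℝ A.e).symm⟩
    have hB : LB B.e = 0 := (hLB B.e).mpr ⟨1, (one_smul ℝ B.e).symm⟩
    have he : bridgeSeminorm LA LB N (A.prod B).e = 0 :=
      le_antisymm (bridgeSeminorm_le_iff.mpr ⟨hA.le, hB.le, hN.2.1.le⟩) (apply_nonneg _ _)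
    rw [map_smul_eq_mul, he, mul_zero]

theorem exists_abs_sub_le (hLA : A.diam LA ≠ ⊤) (hLB : B.diam LB ≠ ⊤) :
    ∃ K : ℝ, ∀ (φ : A.State) (ψ : B.State) (p : A.carrier × B.carrier),
      bridgeSeminorm LA LB N p ≤ 1 → |φ.1 p.1 - ψ.1 p.2| ≤ K := by
  obtain ⟨c, hc⟩ := hN.1
  set D := max (A.diam LA).toReal (B.diam LB).toReal
  refine ⟨(1 + max c 0 * D) / N (A.e, 0), fun φ ψ ⟨a, b⟩ hp => ?_⟩
  obtain ⟨ha, hb, hab⟩ := bridgeSeminorm_le_iff.mp hp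
  have hA := mem_Icc_of_forall_abs_state_le hN.e_fst_ne_zero (x := a - φ.1 a • A.e) (r := D)
    fun χ => by
      rw [map_sub, χ.apply_smul_e]
      exact (abs_sub_le_toReal_diam hLA χ φ ha).trans (le_max_left _ _)
  have hB := mem_Icc_of_forall_abs_state_le hN.e_snd_ne_zero (x := b - ψ.1 b • B.e) (r := D)
    fun χ => by
      rw [map_sub, χ.apply_smul_e]
      exact (abs_sub_le_toReal_diam hLB χ ψ hb).trans (le_max_right _ _)
  have he : (A.prod B).e ≠ 0 := fun h => hN.e_fst_ne_zero (congrArg Prod.fst h)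
  have hrecentred : N (a - φ.1 a • A.e, b - ψ.1 b • B.e) ≤ max c 0 * D := by
    have hnorm := onorm_le he (x := (a - φ.1 a • A.e, b - ψ.1 b • B.e)) ⟨⟨hA.1, hB.1⟩, ⟨hA.2, hB.2⟩⟩
    refine (hc _).trans ?_
    have := onorm_nonneg he (a - φ.1 a • A.e, b - ψ.1 b • B.e)
    calc c * _ ≤ max c 0 * _ := mul_le_mul_of_nonneg_right (le_max_left c 0) this
      _ ≤ max c 0 * D := mul_le_mul_of_nonneg_left hnorm (le_max_right c 0)
  have hkey : |φ.1 a - ψ.1 b| * N (A.e, 0) ≤ 1 + max c 0 * D := by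
    rw [← hN.apply_smul_e]
    calc N (φ.1 a • A.e, ψ.1 b • B.e)
        = N ((a, b) - (a - φ.1 a • A.e, b - ψ.1 b • B.e)) := by simp
      _ ≤ N (a, b) + N (a - φ.1 a • A.e, b - ψ.1 b • B.e) := map_sub_le_add N _ _
      _ ≤ 1 + max c 0 * D := add_le_add hab hrecentred
  rwa [le_div_iff₀ hN.apply_e_fst_pos]

theorem eventually_rho_le (hLA : A.IsLipNorm LA) (hLB : B.IsLipNorm LB)
    (p₀ : (A.prod B).State) {η : ℝ} (hη : 0 < η) :
    ∀ᶠ p in 𝓝 p₀, (A.prod B).rho (bridgeSeminorm LA LB N) p₀ p ≤ ENNReal.ofReal η := by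
  have := nonempty_state hN.e_fst_ne_zero
  have := nonempty_state hN.e_snd_ne_zero
  obtain ⟨K, hK⟩ := hN.exists_abs_sub_le hLA.diam_ne_top hLB.diam_ne_top
  have hη3 : 0 < η / 3 := by positivity
  obtain ⟨φ₀, hφ₀, hφ⟩ := hLA.eventually_abs_sub_le
    (F := fun p : (A.prod B).State => p.1.comp (LinearMap.inl ℝ A.carrier B.carrier))
    (fun p x hx => p.2.2 (x, 0) ⟨hx, le_rfl⟩)
    (fun x => continuous_state_apply (X := A.prod B) (x, 0)) prod_state_apply_e_fst_le_one
    p₀ hη3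
  obtain ⟨ψ₀, hψ₀, hψ⟩ := hLB.eventually_abs_sub_le
    (F := fun p : (A.prod B).State => p.1.comp (LinearMap.inr ℝ A.carrier B.carrier))
    (fun p x hx => p.2.2 (0, x) ⟨le_rfl, hx⟩)
    (fun x => continuous_state_apply (X := A.prod B) (0, x)) prod_state_apply_e_snd_le_one
    p₀ hη3
  have hmass : ∀ᶠ p in 𝓝 p₀, |p.1 (A.e, 0) - p₀.1 (A.e, 0)| * K < η / 3 :=
    (((continuous_state_apply _).sub continuous_const).abs.mul continuous_const).continuousAt
      |>.eventually_lt continuousAt_const (by simpa using hη3)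
  filter_upwards [hφ, hψ, hmass] with p hp₁ hp₂ hp₃
  refine rho_le_ofReal fun ⟨a, b⟩ hab => ?_
  obtain ⟨ha, hb, -⟩ := bridgeSeminorm_le_iff.mp hab
  have h₁ : |p.1 (a, 0) - p.1 (A.e, 0) * φ₀.1 a| ≤ η / 3 := hp₁ a ha
  have h₂ : |p.1 (0, b) - p.1 (0, B.e) * ψ₀.1 b| ≤ η / 3 := hp₂ b hb
  have h₃ : |p.1 (A.e, 0) - p₀.1 (A.e, 0)| * |φ₀.1 a - ψ₀.1 b| ≤ η / 3 :=
    (mul_le_mul_of_nonneg_left (hK φ₀ ψ₀ (a, b) hab) (abs_nonneg _)).trans hp₃.le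
  exact (abs_prod_state_sub_le p hφ₀ hψ₀ a b).trans (by linarith)

theorem ballTopology_eq (hLA : A.IsLipNorm LA) (hLB : B.IsLipNorm LB) :
    ballTopology ((A.prod B).rho (bridgeSeminorm LA LB N)) =
      (inferInstance : TopologicalSpace (A.prod B).State) :=
  le_antisymm (ballTopology_le_of_isLipschitz (hN.isLipschitz_bridgeSeminorm hLA.1 hLB.1))
    (le_ballTopology rho_triangle fun p₀ _ hη => hN.eventually_rho_le hLA hLB p₀ hη)

theorem induces_fst :
    Induces Prod.fst (fun p => bridgeSeminorm LA LB N p) (fun a => LA a) :=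
  induces_of_le_of_exists (fun _ => (bridgeSeminorm_le_iff.mp le_rfl).1) fun a δ hδ =>
    let ⟨b, hb⟩ := hN.2.2.2.1 a δ hδ
    ⟨(a, b), rfl, bridgeSeminorm_le_iff.mpr
      ⟨by linarith, (max_le_iff.mp hb).1, (max_le_iff.mp hb).2⟩⟩

theorem induces_snd :
    Induces Prod.snd (fun p => bridgeSeminorm LA LB N p) (fun b => LB b) :=
  induces_of_le_of_exists (fun _ => (bridgeSeminorm_le_iff.mp le_rfl).2.1) fun b δ hδ =>
    let ⟨a, ha⟩ := hN.2.2.2.2 b δ hδ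
    ⟨(a, b), rfl, bridgeSeminorm_le_iff.mpr
      ⟨(max_le_iff.mp ha).1, by linarith, (max_le_iff.mp ha).2⟩⟩

end IsBridge

/-- **Theorem 5.2 of Rieffel.** If `N` is a bridge between the compact quantum metric
spaces `(A, L_A)` and `(B, L_B)`, then `L(a,b) = max (L_A a) (max (L_B b) (N (a,b)))`
is a Lip-norm on `A ⊕ B` which induces `L_A` and `L_B`, i.e. `L ∈ M(L_A, L_B)`. -/
theorem bridge_yields_admissible_lipnorm (A B : OrderUnitSpace)
    (LA : Seminorm ℝ A.carrier) (LB : Seminorm ℝ B.carrier)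
    (hLA : A.IsLipNorm LA) (hLB : B.IsLipNorm LB)
    (N : Seminorm ℝ (A.prod B).carrier) (hN : IsBridge A B LA LB N) :
    (LA.comp (LinearMap.fst ℝ A.carrier B.carrier) ⊔
      LB.comp (LinearMap.snd ℝ A.carrier B.carrier) ⊔ N) ∈ A.admissible B LA LB :=
  ⟨⟨hN.isLipschitz_bridgeSeminorm hLA.1 hLB.1, hN.ballTopology_eq hLA hLB⟩,
    hN.induces_fst, hN.induces_snd⟩
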